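/- Let q ∈ ℂ be nonzero and not a root of unity, let p ∈ ℂ[[X]] satisfy constantCoeff p = 0 and coeff 1 p = q, and let f ∈ ℂ[[X]] with constantCoeff f = 0 and coeff 1 f = 1 satisfy rescale q f = p ∘ f. For natural numbers m and j ≥ 1, let {q}_{m,j} ∈ ℂ[x] denote the polynomial x^m · Π_{i=0}^{j−1} (x − q^i). Then for every m ≥ 0, q^{m·j} · Π_{i=0}^{j−1} (q^j − q^i) · coeff j f = Σ_{i=0}^{m+j} (({q}_{m,j}).coeff i) · coeff j (p^{∘i}), where p^{∘i} denotes the i-th compositional iterate of p. -/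

import Mathlib

open PowerSeries

/-- Composition of formal power series: `psComp g h = g ∘ h`, with
`coeff j (g ∘ h) = ∑_{l=0}^{j} (coeff l g) * (coeff j (h^l))`. -/
noncomputable def psComp (g h : PowerSeries ℂ) : PowerSeries ℂ :=
  PowerSeries.mk fun j =>
    ∑ l ∈ Finset.range (j + 1), (coeff l g) * (coeff j (h ^ l))


/-- Compositional iterates: `psIter p 0 = X`, `psIter p (i+1) = p ∘ (psIter p i)`. -/
noncomputable def psIter (p : PowerSeries ℂ) : ℕ → PowerSeries ℂ
  | 0 => PowerSeries.X
  | i + 1 => psComp p (psIter p i)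


/-- The polynomial `{q}_{m,j} = x^m * ∏_{i=0}^{j-1} (x - q^i)`. -/
noncomputable def qPochPoly (q : ℂ) (m j : ℕ) : Polynomial ℂ :=
  Polynomial.X ^ m * ∏ i ∈ Finset.range j, (Polynomial.X - Polynomial.C (q ^ i))



lemma aux_coeff_pow_zero {h : PowerSeries ℂ} (h0 : constantCoeff h = 0)
    {n l : ℕ} (hnl : n < l) : coeff n (h ^ l) = 0 := by
  have hx : (X : PowerSeries ℂ) ^ l ∣ h ^ l := pow_dvd_pow_of_dvd (X_dvd_iff.2 h0) l
  exact (X_pow_dvd_iff.1 hx) n hnl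

lemma coeff_psComp (g k : PowerSeries ℂ) (n : ℕ) :
    coeff n (psComp g k) = ∑ l ∈ Finset.range (n + 1), coeff l g * coeff n (k ^ l) := by
  simp [psComp, coeff_mk]

lemma coeff_eval₂ {k : PowerSeries ℂ} (k0 : constantCoeff k = 0) (P : Polynomial ℂ) (n : ℕ) :
    coeff n (P.eval₂ C k) = ∑ l ∈ Finset.range (n + 1), P.coeff l * coeff n (k ^ l) := by
  rw [Polynomial.eval₂_eq_sum, Polynomial.sum_def, map_sum]
  have h1 : ∀ l ∈ P.support, coeff n (C (P.coeff l) * k ^ l)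
      = P.coeff l * coeff n (k ^ l) := by
    intro l _; rw [coeff_C_mul]
  rw [Finset.sum_congr rfl h1]
  calc ∑ x ∈ P.support, P.coeff x * coeff n (k ^ x)
      = ∑ x ∈ P.support ∪ Finset.range (n + 1), P.coeff x * coeff n (k ^ x) :=
        Finset.sum_subset Finset.subset_union_left (fun x _ hx => by
          rw [Polynomial.notMem_support_iff.1 hx, zero_mul])
    _ = ∑ x ∈ Finset.range (n + 1), P.coeff x * coeff n (k ^ x) :=
        (Finset.sum_subset Finset.subset_union_right (fun x _ hx => by
          rw [aux_coeff_pow_zero k0 (by simpa using hx), mul_zero])).symm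

lemma coeff_psComp_trunc {k : PowerSeries ℂ} (k0 : constantCoeff k = 0)
    (g : PowerSeries ℂ) {n N : ℕ} (hnN : n < N) :
    coeff n (psComp g k) = coeff n ((trunc N g).eval₂ C k) := by
  rw [coeff_psComp, coeff_eval₂ k0]
  refine Finset.sum_congr rfl fun l hl => ?_
  rw [coeff_trunc]
  rw [if_pos (lt_of_le_of_lt (Nat.lt_succ_iff.1 (Finset.mem_range.1 hl)) hnN)]

lemma psComp_mul {k : PowerSeries ℂ} (k0 : constantCoeff k = 0) (a b : PowerSeries ℂ) :
    psComp (a * b) k = psComp a k * psComp b k := by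
  ext n
  rw [coeff_psComp_trunc k0 _ (Nat.lt_succ_self n), coeff_mul]
  have h1 : ∀ x ∈ Finset.HasAntidiagonal.antidiagonal n,
      coeff x.1 (psComp a k) * coeff x.2 (psComp b k)
      = coeff x.1 ((trunc (n+1) a).eval₂ C k) * coeff x.2 ((trunc (n+1) b).eval₂ C k) := by
    intro x hx
    have hx' := Finset.HasAntidiagonal.mem_antidiagonal.1 hx
    rw [coeff_psComp_trunc k0 a (Nat.lt_succ_of_le (le_of_add_le_left hx'.le)),
        coeff_psComp_trunc k0 b (Nat.lt_succ_of_le (le_of_add_le_right hx'.le))]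
  rw [Finset.sum_congr rfl h1, ← coeff_mul, ← Polynomial.eval₂_mul_noncomm _ _
    (fun z => Commute.all _ _)]
  rw [coeff_eval₂ k0, coeff_eval₂ k0]
  refine Finset.sum_congr rfl fun l hl => ?_
  have hln : l < n + 1 := Finset.mem_range.1 hl
  congr 1
  rw [Polynomial.coeff_mul, coeff_trunc, if_pos hln, coeff_mul]
  refine Finset.sum_congr rfl fun x hx => ?_
  have hx' := Finset.HasAntidiagonal.mem_antidiagonal.1 hx
  rw [coeff_trunc, coeff_trunc,
    if_pos (lt_of_le_of_lt (le_of_add_le_left hx'.le) hln),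
    if_pos (lt_of_le_of_lt (le_of_add_le_right hx'.le) hln)]

lemma psComp_one (k : PowerSeries ℂ) : psComp 1 k = 1 := by
  ext n
  rw [coeff_psComp]
  rw [Finset.sum_eq_single 0 (fun l _ hl => by rw [coeff_one, if_neg hl, zero_mul])
    (fun h => absurd (Finset.mem_range.2 (Nat.succ_pos n)) h)]
  simp

lemma psComp_pow {k : PowerSeries ℂ} (k0 : constantCoeff k = 0) (g : PowerSeries ℂ) (m : ℕ) :
    psComp (g ^ m) k = (psComp g k) ^ m := by
  induction m with
  | zero => simpa using psComp_one k
  | succ m ih => rw [pow_succ, pow_succ, psComp_mul k0, ih]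

lemma psComp_assoc {g h k : PowerSeries ℂ} (h0 : constantCoeff h = 0)
    (k0 : constantCoeff k = 0) :
    psComp (psComp g h) k = psComp g (psComp h k) := by
  ext n
  rw [coeff_psComp]
  have h1 : ∀ l ∈ Finset.range (n + 1),
      coeff l (psComp g h) * coeff n (k ^ l)
      = ∑ m ∈ Finset.range (n + 1), coeff m g * coeff l (h ^ m) * coeff n (k ^ l) := by
    intro l hl
    rw [coeff_psComp, Finset.sum_mul]
    exact Finset.sum_subset
      (Finset.range_subset_range.2 (Nat.succ_le_succ (Nat.lt_succ_iff.1 (Finset.mem_range.1 hl))))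
      (fun m _ hm => by
        have hlm : l < m := by
          by_contra hc
          exact hm (Finset.mem_range.2 (by omega))
        rw [aux_coeff_pow_zero h0 hlm, mul_zero, zero_mul])
  rw [Finset.sum_congr rfl h1, Finset.sum_comm, coeff_psComp]
  refine Finset.sum_congr rfl fun m _ => ?_
  rw [← psComp_pow k0 h m, coeff_psComp, Finset.mul_sum]
  exact Finset.sum_congr rfl fun l _ => by ring

lemma constantCoeff_psComp (g k : PowerSeries ℂ) :
    constantCoeff (psComp g k) = constantCoeff g := by
  rw [← coeff_zero_eq_constantCoeff_apply, ← coeff_zero_eq_constantCoeff_apply, coeff_psComp]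
  simp

lemma constantCoeff_psIter {p : PowerSeries ℂ} (hp0 : constantCoeff p = 0) (i : ℕ) :
    constantCoeff (psIter p i) = 0 := by
  cases i with
  | zero => simp [psIter]
  | succ i => rw [psIter, constantCoeff_psComp, hp0]

lemma psComp_X_left {f : PowerSeries ℂ} (hf0 : constantCoeff f = 0) :
    psComp X f = f := by
  ext n
  rw [coeff_psComp]
  rw [Finset.sum_eq_single 1 (fun l _ hl => by rw [coeff_X, if_neg hl, zero_mul]) ?_]
  · simp
  · intro h1
    have hn : n = 0 := by
      rcases Nat.eq_zero_or_pos n with h | h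
      · exact h
      · exact absurd (Finset.mem_range.2 (by omega)) h1
    subst hn
    simp [hf0]

lemma psComp_rescale_right (p f : PowerSeries ℂ) (c : ℂ) :
    psComp p (rescale c f) = rescale c (psComp p f) := by
  ext n
  rw [coeff_psComp, coeff_rescale, coeff_psComp, Finset.mul_sum]
  refine Finset.sum_congr rfl fun l _ => ?_
  rw [← map_pow, coeff_rescale]
  ring

lemma iter_comp {q : ℂ} {p f : PowerSeries ℂ} (hp0 : constantCoeff p = 0)
    (hf0 : constantCoeff f = 0) (hpoincare : rescale q f = psComp p f) (i : ℕ) :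
    psComp (psIter p i) f = rescale (q ^ i) f := by
  induction i with
  | zero => rw [psIter, psComp_X_left hf0, pow_zero, rescale_one]; rfl
  | succ i ih =>
    rw [psIter, psComp_assoc (constantCoeff_psIter hp0 i) hf0, ih,
      psComp_rescale_right, ← hpoincare, rescale_rescale, pow_succ, mul_comm]

lemma coeff_pow_self {f : PowerSeries ℂ} (hf0 : constantCoeff f = 0)
    (hf1 : coeff 1 f = 1) (n : ℕ) : coeff n (f ^ n) = 1 := by
  induction n with
  | zero => simp
  | succ n ih =>
    rw [pow_succ', coeff_mul]
    rw [Finset.sum_eq_single (1, n) ?_ (fun h =>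
      absurd (Finset.HasAntidiagonal.mem_antidiagonal.2 (by omega : (1 : ℕ) + n = n + 1)) h)]
    · rw [hf1, ih, one_mul]
    · rintro ⟨u, v⟩ hx hne
      have hx' := Finset.HasAntidiagonal.mem_antidiagonal.1 hx
      simp only at hx' ⊢
      rcases lt_trichotomy v n with h | h | h
      · rw [aux_coeff_pow_zero hf0 h, mul_zero]
      · have hu : u = 1 := by omega
        exact absurd (by rw [hu, h]) hne
      · have hu : u = 0 := by omega
        subst hu
        rw [← coeff_zero_eq_constantCoeff_apply] at hf0
        rw [hf0, zero_mul]

theorem stmt_7 (q : ℂ) (hq0 : q ≠ 0) (hq1 : ∀ k : ℕ, 0 < k → q ^ k ≠ 1)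
    (p : PowerSeries ℂ) (hp0 : constantCoeff p = 0) (hp1 : coeff 1 p = q)
    (f : PowerSeries ℂ) (hf0 : constantCoeff f = 0) (hf1 : coeff 1 f = 1)
    (hpoincare : rescale q f = psComp p f)
    (j : ℕ) (hj : 1 ≤ j) :
    ∀ m : ℕ,
      q ^ (m * j) * (∏ i ∈ Finset.range j, (q ^ j - q ^ i)) * coeff j f =
        ∑ i ∈ Finset.range (m + j + 1),
          (qPochPoly q m j).coeff i * coeff j (psIter p i) := by
  intro m
  set P : Polynomial ℂ := qPochPoly q m j with hP
  set N : ℕ := m + j + 1 with hN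
  set G : PowerSeries ℂ := ∑ i ∈ Finset.range N, P.coeff i • psIter p i with hG
  have hGc : ∀ n, coeff n G = ∑ i ∈ Finset.range N, P.coeff i * coeff n (psIter p i) := by
    intro n
    rw [hG, map_sum]
    exact Finset.sum_congr rfl fun i _ => by rw [coeff_smul, smul_eq_mul]
  have hdeg : P.natDegree < N := by
    have h1 : P.natDegree ≤ (Polynomial.X ^ m : Polynomial ℂ).natDegree
        + (∏ i ∈ Finset.range j, (Polynomial.X - Polynomial.C (q ^ i))).natDegree :=
      Polynomial.natDegree_mul_le
    have h2 : (∏ i ∈ Finset.range j, (Polynomial.X - Polynomial.C (q ^ i))).natDegree ≤ j := by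
      refine (Polynomial.natDegree_prod_le _ _).trans ?_
      calc ∑ i ∈ Finset.range j, (Polynomial.X - Polynomial.C (q ^ i)).natDegree
          ≤ ∑ _i ∈ Finset.range j, 1 := by
            apply Finset.sum_le_sum
            intro i _
            rw [Polynomial.natDegree_X_sub_C]
        _ = j := by simp
    rw [Polynomial.natDegree_X_pow] at h1
    omega
  have hcomp : ∀ n, coeff n (psComp G f) = P.eval (q ^ n) * coeff n f := by
    intro n
    rw [coeff_psComp]
    calc ∑ l ∈ Finset.range (n+1), coeff l G * coeff n (f^l)
        = ∑ l ∈ Finset.range (n+1), ∑ i ∈ Finset.range N,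
            P.coeff i * (coeff l (psIter p i) * coeff n (f^l)) := by
          refine Finset.sum_congr rfl fun l _ => ?_
          rw [hGc l, Finset.sum_mul]
          exact Finset.sum_congr rfl fun i _ => by ring
      _ = ∑ i ∈ Finset.range N, P.coeff i *
            ∑ l ∈ Finset.range (n+1), coeff l (psIter p i) * coeff n (f^l) := by
          rw [Finset.sum_comm]
          exact Finset.sum_congr rfl fun i _ => by rw [Finset.mul_sum]
      _ = ∑ i ∈ Finset.range N, P.coeff i * coeff n (psComp (psIter p i) f) := by
          exact Finset.sum_congr rfl fun i _ => by rw [coeff_psComp]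
      _ = ∑ i ∈ Finset.range N, P.coeff i * ((q^n)^i * coeff n f) := by
          refine Finset.sum_congr rfl fun i _ => ?_
          rw [iter_comp hp0 hf0 hpoincare, coeff_rescale, ← pow_mul, mul_comm i n, pow_mul]
      _ = (∑ i ∈ Finset.range N, P.coeff i * (q^n)^i) * coeff n f := by
          rw [Finset.sum_mul]
          exact Finset.sum_congr rfl fun i _ => by ring
      _ = P.eval (q^n) * coeff n f := by rw [Polynomial.eval_eq_sum_range' hdeg]
  have heval0 : ∀ n < j, P.eval (q ^ n) = 0 := by
    intro n hn
    rw [hP, qPochPoly, Polynomial.eval_mul]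
    have h1 : (∏ i ∈ Finset.range j,
        (Polynomial.X - Polynomial.C (q^i))).eval (q^n) = 0 := by
      rw [Polynomial.eval_prod]
      refine Finset.prod_eq_zero (Finset.mem_range.2 hn) ?_
      simp
    rw [h1, mul_zero]
  have hG0 : ∀ n, n < j → coeff n G = 0 := by
    intro n
    induction n using Nat.strong_induction_on with
    | _ n ih =>
      intro hn
      have h1 := hcomp n
      rw [heval0 n hn, zero_mul, coeff_psComp] at h1
      rw [Finset.sum_eq_single n (fun l hl hne => by
          have hln : l < n := by
            have := Finset.mem_range.1 hl
            omega
          rw [ih l hln (lt_trans hln hn), zero_mul])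
        (fun h => absurd (Finset.self_mem_range_succ n) h),
        coeff_pow_self hf0 hf1 n, mul_one] at h1
      exact h1
  have h5 : coeff j G = P.eval (q^j) * coeff j f := by
    have h1 := hcomp j
    rw [coeff_psComp, Finset.sum_eq_single j (fun l hl hne => by
        have hln : l < j := by
          have := Finset.mem_range.1 hl
          omega
        rw [hG0 l hln, zero_mul])
      (fun h => absurd (Finset.self_mem_range_succ j) h),
      coeff_pow_self hf0 hf1 j, mul_one] at h1
    exact h1
  have h6 : P.eval (q^j) = q^(m*j) * ∏ i ∈ Finset.range j, (q^j - q^i) := by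
    rw [hP, qPochPoly, Polynomial.eval_mul, Polynomial.eval_pow, Polynomial.eval_X,
      Polynomial.eval_prod, ← pow_mul, mul_comm j m]
    simp
  calc q ^ (m * j) * (∏ i ∈ Finset.range j, (q ^ j - q ^ i)) * coeff j f
      = P.eval (q^j) * coeff j f := by rw [h6]
    _ = coeff j G := h5.symm
    _ = ∑ i ∈ Finset.range (m + j + 1), P.coeff i * coeff j (psIter p i) := hGc j
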